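/- Suppose a finite planar point set S in general position is colored with c ≥ 2 colors such that the largest color class S_1 satisfies |S_1| = (1/(c-1))·∑_{a=2}^c |S_a| + γ for some real γ. Fix s ∈ S_1 and a triangulation of S_1 containing at least |S_1| - 2 triangles with s as a vertex. Then at most (|S| - |S_1|)/(c-1) of these triangles contain at least c-1 points of S in their interior, and hence at least γ - 2 of these monochromatic triangles contain at most c-2 points of S in their interior. -/

import Mathlib

/-!
The points of `S` inside the triangles through `s` form pairwise disjoint subsets of `S \ S₁`,
because the open triangles are pairwise disjoint and contain no point of `S₁`. Each
`(c - 1)`-blocked triangle takes at least `c - 1` of these points, so there are at most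
`(|S| - |S₁|) / (c - 1)` blocked triangles, and the remaining at least
`|S₁| - 2 - (|S| - |S₁|) / (c - 1) = γ - 2` triangles are not blocked.
-/

open Finset Function

theorem Finset.card_filter_le_card_mul_le_card_of_pairwiseDisjoint {ι α : Type*} [DecidableEq α]
    {𝒯 : Finset ι} {f : ι → Finset α} {U : Finset α} (hf : (𝒯 : Set ι).PairwiseDisjoint f)
    (hU : ∀ t ∈ 𝒯, f t ⊆ U) (k : ℕ) :
    #{t ∈ 𝒯 | k ≤ #(f t)} * k ≤ #U :=
  calc #{t ∈ 𝒯 | k ≤ #(f t)} * k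
      ≤ ∑ t ∈ {t ∈ 𝒯 | k ≤ #(f t)}, #(f t) := by
        simpa only [smul_eq_mul] using
          card_nsmul_le_sum _ (fun t => #(f t)) k fun t ht => (mem_filter.1 ht).2
    _ ≤ ∑ t ∈ 𝒯, #(f t) := sum_le_sum_of_subset (filter_subset _ _)
    _ = #(𝒯.biUnion f) := (card_biUnion hf).symm
    _ ≤ #U := card_le_card (biUnion_subset.2 hU)

open Classical in
theorem card_filter_le_card_filter_mem_mul_add_card_le {ι α : Type*} {𝒯 : Finset ι}
    {R : ι → Set α} (hR : (𝒯 : Set ι).PairwiseDisjoint R) {S T : Finset α} (hTS : T ⊆ S)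
    (hT : ∀ t ∈ 𝒯, ∀ q ∈ T, q ∉ R t) (k : ℕ) :
    #{t ∈ 𝒯 | k ≤ #{q ∈ S | q ∈ R t}} * k + #T ≤ #S := by
  have hpoints : (𝒯 : Set ι).PairwiseDisjoint fun t => {q ∈ S | q ∈ R t} :=
    fun t ht t' ht' hne => disjoint_left.2 fun _ hq hq' =>
      Set.disjoint_left.1 (hR ht ht' hne) (mem_filter.1 hq).2 (mem_filter.1 hq').2
  have hsub : ∀ t ∈ 𝒯, {q ∈ S | q ∈ R t} ⊆ S \ T := fun t ht q hq =>
    mem_sdiff.2 ⟨(mem_filter.1 hq).1, fun hqT => hT t ht q hqT (mem_filter.1 hq).2⟩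
  have hcount := card_filter_le_card_mul_le_card_of_pairwiseDisjoint hpoints hsub k
  rw [card_sdiff_of_subset hTS] at hcount
  have hTS_card := card_le_card hTS
  omega

theorem sum_card_sdiff_singleton_add_card_eq_card {ι α : Type*} [Fintype ι] [DecidableEq ι]
    [DecidableEq α] {S : Finset α} {P : ι → Finset α} (hP : Pairwise (Disjoint on P))
    (hS : ∀ x, x ∈ S ↔ ∃ i, x ∈ P i) (i : ι) :
    ∑ a ∈ univ \ {i}, #(P a) + #(P i) = #S := by
  have hSP : S = univ.biUnion P := by
    ext x
    simp [hS x]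
  rw [hSP, card_biUnion fun a _ b _ hab => hP hab, ← sum_singleton (fun a => #(P a)) i,
    sum_sdiff (subset_univ _)]

open Classical in
theorem card_blocked_le_and_sub_two_le_card_unblocked {ι α : Type*} {𝒯 : Finset ι}
    {R : ι → Set α} {S T : Finset α} {c : ℕ} {γ : ℝ} (hc : 2 ≤ c)
    (hR : (𝒯 : Set ι).PairwiseDisjoint R) (hTS : T ⊆ S) (hT : ∀ t ∈ 𝒯, ∀ q ∈ T, q ∉ R t)
    (h𝒯 : (#T : ℝ) - 2 ≤ #𝒯) (hγ : (#T : ℝ) = (#S - #T) / (c - 1) + γ) :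
    (#{t ∈ 𝒯 | c - 1 ≤ #{q ∈ S | q ∈ R t}} : ℝ) ≤ (#S - #T) / (c - 1) ∧
      γ - 2 ≤ #{t ∈ 𝒯 | #{q ∈ S | q ∈ R t} ≤ c - 2} := by
  set blocked := {t ∈ 𝒯 | c - 1 ≤ #{q ∈ S | q ∈ R t}}
  have hc₁ : (0 : ℝ) < c - 1 := sub_pos.2 (by exact_mod_cast hc)
  have hblocked : (#blocked : ℝ) * (c - 1) + #T ≤ #S := by
    have := card_filter_le_card_filter_mem_mul_add_card_le hR hTS hT (c - 1)
    rw [← Nat.cast_pred (by omega)]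
    exact_mod_cast this
  have hsplit : #{t ∈ 𝒯 | #{q ∈ S | q ∈ R t} ≤ c - 2} + #blocked = #𝒯 := by
    rw [← card_filter_add_card_filter_not (s := 𝒯) fun t => #{q ∈ S | q ∈ R t} ≤ c - 2]
    congr 2
    exact filter_congr fun t _ => by omega
  have hbound : (#blocked : ℝ) ≤ (#S - #T) / (c - 1) := by
    rw [le_div_iff₀ hc₁]
    linarith
  refine ⟨hbound, ?_⟩
  have hsplit_real : (#{t ∈ 𝒯 | #{q ∈ S | q ∈ R t} ≤ c - 2} : ℝ) + #blocked = #𝒯 := by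
    exact_mod_cast hsplit
  linarith

open Classical in
theorem stmt18 (c : ℕ) (hc : 2 ≤ c) (S : Finset (ℝ × ℝ))
    (Sa : Fin c → Finset (ℝ × ℝ))
    (hdisj : ∀ a b : Fin c, a ≠ b → Disjoint (Sa a) (Sa b))
    (hcover : ∀ x, x ∈ S ↔ ∃ a, x ∈ Sa a)
    (γ : ℝ)
    (hγ : ((Sa ⟨0, by omega⟩).card : ℝ) =
      (1 / ((c : ℝ) - 1)) *
        (∑ a ∈ Finset.univ \ {(⟨0, by omega⟩ : Fin c)}, ((Sa a).card : ℝ)) + γ)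
    (𝒯 : Finset (Finset (ℝ × ℝ)))
    (hTcard : ((Sa ⟨0, by omega⟩).card : ℝ) - 2 ≤ (𝒯.card : ℝ))
    (hdisjint : ∀ t ∈ 𝒯, ∀ t' ∈ 𝒯, t ≠ t' →
      interior (convexHull ℝ (t : Set (ℝ × ℝ))) ∩
        interior (convexHull ℝ (t' : Set (ℝ × ℝ))) = ∅)
    (hnoc1 : ∀ t ∈ 𝒯, ∀ q ∈ Sa ⟨0, by omega⟩,
      q ∉ interior (convexHull ℝ (t : Set (ℝ × ℝ)))) :
    ((𝒯.filter fun t =>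
          c - 1 ≤ (S.filter fun q =>
            q ∈ interior (convexHull ℝ (t : Set (ℝ × ℝ)))).card).card : ℝ)
        ≤ ((S.card : ℝ) - ((Sa ⟨0, by omega⟩).card : ℝ)) / ((c : ℝ) - 1) ∧
      γ - 2 ≤ ((𝒯.filter fun t =>
          (S.filter fun q =>
            q ∈ interior (convexHull ℝ (t : Set (ℝ × ℝ)))).card ≤ c - 2).card : ℝ) := by
  -- the filters run over `𝒯.image (↑)`, the finset monad's reading of `(t : Set (ℝ × ℝ))`
  simp only [bind_def, pure_def, sup_singleton_apply]
  have hcolors := sum_card_sdiff_singleton_add_card_eq_card hdisj hcover ⟨0, by omega⟩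
  refine card_blocked_le_and_sub_two_le_card_unblocked hc ?_
    (fun x hx => (hcover x).2 ⟨_, hx⟩) ?_ ?_ ?_
  · rw [coe_image, coe_injective.injOn.pairwiseDisjoint_image]
    intro t ht t' ht' hne
    exact Set.disjoint_iff_inter_eq_empty.2 (hdisjint t ht t' ht' hne)
  · simpa using hnoc1
  · convert hTcard using 2
    exact card_image_of_injective _ coe_injective
  · rw [← hcolors, Nat.cast_add, add_sub_cancel_right, Nat.cast_sum, ← one_div_mul_eq_div]
    exact hγ
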